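/- arXiv:1204.0647 — 7 statements merged into one kernel-verified Lean document; each statement's English description precedes it below -/
import Mathlib

section
/- For any graphs G and H with G having at least one vertex, the chromatic number of the corona product satisfies χ(G⊙H) = max{χ(G), χ(H)+1}. -/
open SimpleGraph

/-- The corona product `G ⊙ H`: one copy of `G` together with one copy of `H`
for each vertex of `G`, where the `i`-th vertex of `G` is joined by an edge to
every vertex of the `i`-th copy of `H`. -/
def corona {α β : Type*} (G : SimpleGraph α) (H : SimpleGraph β) :
    SimpleGraph (α ⊕ α × β) where
  Adj x y :=
    match x, y with
    | Sum.inl u, Sum.inl v => G.Adj u v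
    | Sum.inl u, Sum.inr q => u = q.1
    | Sum.inr p, Sum.inl v => p.1 = v
    | Sum.inr p, Sum.inr q => p.1 = q.1 ∧ H.Adj p.2 q.2
  symm := by
    constructor
    rintro (u | p) (v | q) h
    · exact h.symm
    · exact h.symm
    · exact h.symm
    · exact ⟨h.1.symm, h.2.symm⟩
  loopless := by
    constructor
    rintro (u | p) h
    · exact G.irrefl h
    · exact H.irrefl h.2

/-!
A proper `(n + 1)`-colouring of `G` extends to `G ⊙ H` as soon as `H` is `n`-colourable: colour
the copy of `H` at `v` with the `n` colours other than that of `v`. Conversely a colouring of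
`G ⊙ H` restricts to one of `G`, and on any copy of `H` it avoids the colour of the attached vertex
of `G`. Hence `G ⊙ H` is `(n + 1)`-colourable iff `G` is `(n + 1)`-colourable and `H` is
`n`-colourable.
-/

section

variable {α β : Type*} {G : SimpleGraph α} {H : SimpleGraph β}

variable (G H) in
def coronaInl : G ↪g corona G H where
  toFun := Sum.inl
  inj' := Sum.inl_injective
  map_rel_iff' := Iff.rfl

theorem corona_colorable_succ {n : ℕ} (hG : G.Colorable (n + 1)) (hH : H.Colorable n) :
    (corona G H).Colorable (n + 1) := by
  obtain ⟨cG⟩ := hG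
  obtain ⟨cH⟩ := hH
  refine ⟨Coloring.mk (Sum.elim cG fun p ↦ (cG p.1).succAbove (cH p.2)) ?_⟩
  rintro (u | ⟨u, b⟩) (v | ⟨v, c⟩) h
  · exact cG.valid h
  · obtain rfl : u = v := h
    exact (Fin.succAbove_ne _ _).symm
  · obtain rfl : u = v := h
    exact Fin.succAbove_ne _ _
  · obtain ⟨rfl, hbc⟩ := h
    exact (Fin.succAbove_right_injective (p := cG u)).ne (cH.valid hbc)

theorem colorable_of_corona_colorable_succ (v : α) {n : ℕ}
    (h : (corona G H).Colorable (n + 1)) : H.Colorable n := by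
  obtain ⟨C⟩ := h
  have hC : ∀ b, C (.inr (v, b)) ≠ C (.inl v) := fun b ↦ C.valid (G := corona G H) rfl
  let C' : H.Coloring {x // x ≠ C (.inl v)} :=
    Coloring.mk (fun b ↦ ⟨C (.inr (v, b)), hC b⟩) fun {b c} hbc heq ↦
      C.valid (show (corona G H).Adj (.inr (v, b)) (.inr (v, c)) from ⟨rfl, hbc⟩)
        (congrArg Subtype.val heq)
  simpa using C'.colorable

theorem corona_colorable_succ_iff [Nonempty α] {n : ℕ} :
    (corona G H).Colorable (n + 1) ↔ G.Colorable (n + 1) ∧ H.Colorable n :=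
  ⟨fun h ↦ ⟨h.of_hom (coronaInl G H).toHom,
      colorable_of_corona_colorable_succ (Classical.arbitrary α) h⟩,
    fun h ↦ corona_colorable_succ h.1 h.2⟩

end

/-- For any graphs `G` and `H` with `G` having at least one vertex,
`χ(G ⊙ H) = max {χ(G), χ(H) + 1}`. -/
theorem stmt_0 {α β : Type*} [Nonempty α] (G : SimpleGraph α) (H : SimpleGraph β) :
    (corona G H).chromaticNumber = max G.chromaticNumber (H.chromaticNumber + 1) := by
  refine WithTop.eq_of_forall_le_coe_iff fun k ↦ ?_
  change _ ≤ (k : ℕ∞) ↔ _ ≤ (k : ℕ∞)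
  cases k with
  | zero => simp
  | succ n =>
    rw [max_le_iff, Nat.cast_succ, ENat.add_le_add_iff_right ENat.one_ne_top, ← Nat.cast_succ]
    simp only [chromaticNumber_le_iff_colorable, corona_colorable_succ_iff]
end

section
/- Let G be a graph of maximum degree Δ₁ and let H be a graph of order n₂. Then χ_{≤3}(G⊙H) ≤ χ_{≤3}(G) + n₂(Δ₁ + 1). -/
open SimpleGraph

/-- `G` admits a coloring with `n` colors in which any two distinct vertices at
distance at most `k` (i.e. joined by a walk of length at most `k`) get
distinct colors. -/
def DistKColorable {α : Type*} (G : SimpleGraph α) (k n : ℕ) : Prop :=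
  ∃ c : α → Fin n, ∀ u v : α, u ≠ v → (∃ w : G.Walk u v, w.length ≤ k) → c u ≠ c v

/-- The distance-`k` chromatic number of `G`. -/
noncomputable def distChromaticNumber {α : Type*} (G : SimpleGraph α) (k : ℕ) : ℕ :=
  sInf {n | DistKColorable G k n}


/-! Colour a vertex `v` of `G` by an optimal distance-3 colour `c v`, and the vertex `b` of the
copy of `H` at `v` by the pair `(C v, b)`, where `C` is a proper `(Δ₁ + 1)`-colouring of `G`
(greedy). Base vertices within distance 3 in `G ⊙ H` are within distance 3 in `G`, since
projecting a walk to `G` does not lengthen it. A walk between the copies at `u ≠ v` must leave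
one copy through `u` and enter the other through `v`, spending two edges; so if it has length at
most 3 then `u` and `v` are adjacent and `C u ≠ C v`. -/

namespace SimpleGraph

variable {V : Type*} (G : SimpleGraph V) [Fintype V] [DecidableRel G.Adj]

theorem exists_free_color_of_maxDegree_lt {γ : Type*} [Fintype γ] [DecidableEq γ]
    (hγ : G.maxDegree < Fintype.card γ) (c : V → γ) (a : V) :
    ∃ k : γ, ∀ v, G.Adj a v → c v ≠ k := by
  have hcard : ((G.neighborFinset a).image c).card < (Finset.univ : Finset γ).card :=
    calc ((G.neighborFinset a).image c).card ≤ G.degree a := Finset.card_image_le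
      _ ≤ G.maxDegree := G.degree_le_maxDegree a
      _ < _ := hγ
  obtain ⟨k, -, hk⟩ := Finset.exists_mem_notMem_of_card_lt_card hcard
  exact ⟨k, fun v hv hvk => hk (Finset.mem_image.2 ⟨v, (G.mem_neighborFinset a v).2 hv, hvk⟩)⟩

/-- Greedy colouring: a new vertex always sees at most `maxDegree` colours among its
neighbours. -/
theorem exists_coloring_on_finset (s : Finset V) :
    ∃ c : V → Fin (G.maxDegree + 1), ∀ u ∈ s, ∀ v ∈ s, G.Adj u v → c u ≠ c v := by
  classical
  induction s using Finset.induction_on with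
  | empty => exact ⟨fun _ => 0, by simp⟩
  | insert a s ha ih =>
    obtain ⟨c, hc⟩ := ih
    obtain ⟨k, hk⟩ := G.exists_free_color_of_maxDegree_lt (by simp) c a
    refine ⟨Function.update c a k, ?_⟩
    have key : ∀ v ∈ s, G.Adj a v → Function.update c a k v ≠ k := fun v _ hav => by
      rw [Function.update_of_ne hav.ne']
      exact hk v hav
    simp only [Finset.mem_insert]
    rintro u (rfl | hu) v (rfl | hv) huv
    · exact (G.irrefl huv).elim
    · simpa using (key v hv huv).symm
    · simpa using key u hu huv.symm
    · rw [Function.update_of_ne (ne_of_mem_of_not_mem hu ha),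
        Function.update_of_ne (ne_of_mem_of_not_mem hv ha)]
      exact hc u hu v hv huv

theorem colorable_maxDegree_add_one : G.Colorable (G.maxDegree + 1) := by
  obtain ⟨c, hc⟩ := G.exists_coloring_on_finset Finset.univ
  exact ⟨Coloring.mk c fun huv => hc _ (Finset.mem_univ _) _ (Finset.mem_univ _) huv⟩

end SimpleGraph

section DistKColorable

variable {V : Type*} (G : SimpleGraph V)

theorem DistKColorable.of_fintype {γ : Type*} [Fintype γ] {k : ℕ} (c : V → γ)
    (hc : ∀ u v, u ≠ v → (∃ w : G.Walk u v, w.length ≤ k) → c u ≠ c v) :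
    DistKColorable G k (Fintype.card γ) :=
  ⟨fun v => Fintype.equivFin γ (c v), fun u v huv hw h =>
    hc u v huv hw ((Fintype.equivFin γ).injective h)⟩

theorem distKColorable_card [Fintype V] (k : ℕ) : DistKColorable G k (Fintype.card V) :=
  DistKColorable.of_fintype G id fun _ _ huv _ => huv

theorem distKColorable_distChromaticNumber [Fintype V] (k : ℕ) :
    DistKColorable G k (distChromaticNumber G k) :=
  Nat.sInf_mem (s := {n | DistKColorable G k n}) ⟨_, distKColorable_card G k⟩

end DistKColorable

namespace corona

variable {α β : Type*} {G : SimpleGraph α} {H : SimpleGraph β}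

@[simp] theorem adj_inl_inr {u : α} {q : α × β} :
    (corona G H).Adj (.inl u) (.inr q) ↔ u = q.1 := Iff.rfl
@[simp] theorem adj_inr_inl {p : α × β} {v : α} :
    (corona G H).Adj (.inr p) (.inl v) ↔ p.1 = v := Iff.rfl
@[simp] theorem adj_inr_inr {p q : α × β} :
    (corona G H).Adj (.inr p) (.inr q) ↔ p.1 = q.1 ∧ H.Adj p.2 q.2 := Iff.rfl

def base : α ⊕ α × β → α := Sum.elim id Prod.fst

theorem exists_walk_base_length_le :
    ∀ {x y : α ⊕ α × β} (w : (corona G H).Walk x y),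
      ∃ w' : G.Walk (base x) (base y), w'.length ≤ w.length
  | _, _, .nil => ⟨.nil, le_rfl⟩
  | .inl _, _, .cons (v := .inl _) h w => by
    obtain ⟨w', hw'⟩ := exists_walk_base_length_le w
    exact ⟨.cons h w', Nat.succ_le_succ hw'⟩
  | .inl _, _, .cons (v := .inr q) h w => by
    obtain ⟨w', hw'⟩ := exists_walk_base_length_le w
    obtain rfl := adj_inl_inr.1 h
    exact ⟨w', Nat.le_succ_of_le hw'⟩
  | .inr _, _, .cons (v := .inl _) h w => by
    obtain ⟨w', hw'⟩ := exists_walk_base_length_le w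
    obtain rfl := adj_inr_inl.1 h
    exact ⟨w', Nat.le_succ_of_le hw'⟩
  | .inr (_, _), _, .cons (v := .inr (_, _)) h w => by
    obtain ⟨w', hw'⟩ := exists_walk_base_length_le w
    obtain ⟨rfl, -⟩ := adj_inr_inr.1 h
    exact ⟨w', Nat.le_succ_of_le hw'⟩

/-- A walk leaving the copy of `H` at `p.1` must pass through the vertex `p.1` of `G`. -/
theorem exists_walk_inl_of_base_ne :
    ∀ {p : α × β} {y : α ⊕ α × β} (w : (corona G H).Walk (.inr p) y), base y ≠ p.1 →
      ∃ w' : (corona G H).Walk (.inl p.1) y, w'.length + 1 ≤ w.length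
  | _, _, .nil, hy => absurd rfl hy
  | _, _, .cons (v := .inl _) h w, _ => by
    obtain rfl := adj_inr_inl.1 h
    exact ⟨w, le_rfl⟩
  | _, _, .cons (v := .inr _) h w, hy => by
    have hpq := (adj_inr_inr.1 h).1
    obtain ⟨w', hw'⟩ := exists_walk_inl_of_base_ne w (hpq ▸ hy)
    refine ⟨w'.copy (congrArg _ hpq.symm) rfl, ?_⟩
    rw [Walk.length_copy, Walk.length_cons]
    omega

theorem exists_walk_length_add_two_le_of_fst_ne {p q : α × β} (w : (corona G H).Walk (.inr p) (.inr q))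
    (hpq : p.1 ≠ q.1) : ∃ w' : G.Walk p.1 q.1, w'.length + 2 ≤ w.length := by
  obtain ⟨w₁, hw₁⟩ := exists_walk_inl_of_base_ne w hpq.symm
  obtain ⟨w₂, hw₂⟩ := exists_walk_inl_of_base_ne w₁.reverse hpq
  obtain ⟨w₃, hw₃⟩ := exists_walk_base_length_le w₂.reverse
  simp only [Walk.length_reverse] at hw₂ hw₃
  have hw₃' : w₃.length + 2 ≤ w.length := by omega
  exact ⟨w₃, hw₃'⟩

end corona

open corona in
theorem distKColorable_corona {α β : Type*} [Fintype β] {G : SimpleGraph α}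
    (H : SimpleGraph β) {m n : ℕ} (hG : DistKColorable G 3 m) (hn : G.Colorable n) :
    DistKColorable (corona G H) 3 (m + Fintype.card β * n) := by
  obtain ⟨c, hc⟩ := hG
  obtain ⟨C⟩ := hn
  have hcard : Fintype.card (Fin m ⊕ Fin n × β) = m + Fintype.card β * n := by
    simp [mul_comm]
  rw [← hcard]
  refine DistKColorable.of_fintype _ (Sum.map c fun p => (C p.1, p.2)) ?_
  rintro (u | p) (v | q) hxy ⟨w, hw⟩ hcol
  · obtain ⟨w', hw'⟩ := exists_walk_base_length_le w
    exact hc u v (fun h => hxy (congrArg _ h)) ⟨w', hw'.trans hw⟩ (Sum.inl_injective hcol)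
  · exact Sum.inl_ne_inr hcol
  · exact Sum.inr_ne_inl hcol
  · obtain ⟨hC, h₂⟩ := Prod.ext_iff.1 (Sum.inr_injective hcol)
    by_cases h₁ : p.1 = q.1
    · exact hxy (congrArg _ (Prod.ext h₁ h₂))
    obtain ⟨w', hw'⟩ := exists_walk_length_add_two_le_of_fst_ne w h₁
    have hpos : w'.length ≠ 0 := fun h => h₁ (Walk.eq_of_length_eq_zero h)
    have hadj : G.Adj p.1 q.1 := Walk.adj_of_length_eq_one (p := w') (by omega)
    exact C.valid hadj hC

/-- Let `G` be a graph of maximum degree `Δ₁` and `H` a graph of order `n₂`.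
Then `χ_{≤3}(G ⊙ H) ≤ χ_{≤3}(G) + n₂ (Δ₁ + 1)`. -/
theorem stmt_4 {α β : Type*} [Fintype α] [Fintype β]
    (G : SimpleGraph α) [DecidableRel G.Adj] (H : SimpleGraph β) :
    distChromaticNumber (corona G H) 3
      ≤ distChromaticNumber G 3 + Fintype.card β * (G.maxDegree + 1) :=
  Nat.sInf_le <| distKColorable_corona H (distKColorable_distChromaticNumber G 3)
    G.colorable_maxDegree_add_one
end

section
/- Let G be a triangle-free graph with at least one edge, of minimum degree δ₁ and maximum degree Δ₁, and let H be a graph of order n₂. Then χ_{≤3}(G⊙H) ≥ 2n₂ + Δ₁ + δ₁. -/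
/-!
Pick an edge `uv` of `G` with `deg u = Δ₁`. In `G ⊙ H` every vertex of
`N_G(u) ∪ N_G(v)` and of the copies of `H` attached to `u` and `v` lies within distance one
of `u` or `v`, so any two of them are at distance at most three and need distinct colors.
Triangle-freeness makes `N_G(u)` and `N_G(v)` disjoint, so there are
`deg u + deg v + 2 n₂ ≥ Δ₁ + δ₁ + 2 n₂` such vertices.
-/

open SimpleGraph

open Finset

namespace SimpleGraph

variable {α : Type*} {G : SimpleGraph α}

lemma CliqueFree.disjoint_neighborFinset_of_adj [Fintype α] [DecidableRel G.Adj]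
    (hG : G.CliqueFree 3) {u v : α} (huv : G.Adj u v) :
    Disjoint (G.neighborFinset u) (G.neighborFinset v) := by
  classical
  refine Finset.disjoint_left.mpr fun x hxu hxv ↦ hG {u, v, x} ?_
  exact is3Clique_triple_iff.mpr ⟨huv, (G.mem_neighborFinset u x).mp hxu,
    (G.mem_neighborFinset v x).mp hxv⟩

lemma Adj.edist_le_three {u v s t : α} (huv : G.Adj u v)
    (hs : G.edist s u ≤ 1 ∨ G.edist s v ≤ 1) (ht : G.edist t u ≤ 1 ∨ G.edist t v ≤ 1) :
    G.edist s t ≤ 3 := by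
  have hd : G.edist u v = 1 := edist_eq_one_iff_adj.mpr huv
  have via (x y : α) (hx : G.edist s x ≤ 1) (hy : G.edist t y ≤ 1) (hxy : G.edist x y ≤ 1) :
      G.edist s t ≤ 3 :=
    calc G.edist s t ≤ G.edist s x + G.edist x t := G.edist_triangle
      _ ≤ G.edist s x + (G.edist x y + G.edist y t) := by gcongr; exact G.edist_triangle
      _ ≤ 1 + (1 + 1) := by rw [edist_comm (u := y)]; gcongr
      _ = 3 := by norm_num
  rcases hs with hs | hs <;> rcases ht with ht | ht
  · exact via u u hs ht (by simp)
  · exact via u v hs ht hd.le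
  · exact via v u hs ht (by rw [edist_comm, hd])
  · exact via v v hs ht (by simp)

lemma distKColorable_card [Fintype α] (G : SimpleGraph α) (k : ℕ) :
    DistKColorable G k (Fintype.card α) :=
  ⟨Fintype.equivFin α, fun _ _ hne _ h ↦ hne ((Fintype.equivFin α).injective h)⟩

lemma DistKColorable.card_le {k n : ℕ} (hc : DistKColorable G k n) {S : Finset α}
    (hS : ∀ s ∈ S, ∀ t ∈ S, G.edist s t ≤ k) : S.card ≤ n := by
  obtain ⟨c, hc⟩ := hc
  calc S.card ≤ (univ : Finset (Fin n)).card := by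
        refine card_le_card_of_injOn c (fun _ _ ↦ mem_univ _) fun s hs t ht hst ↦ ?_
        by_contra hne
        obtain ⟨w, hw⟩ := exists_walk_of_edist_ne_top (ne_top_of_le_ne_top
          (ENat.natCast_ne_top k) (hS s hs t ht))
        exact hc s t hne ⟨w, by exact_mod_cast hw.le.trans (hS s hs t ht)⟩ hst
    _ = n := card_fin n

lemma card_le_distChromaticNumber [Fintype α] {k : ℕ} {S : Finset α}
    (hS : ∀ s ∈ S, ∀ t ∈ S, G.edist s t ≤ k) : S.card ≤ distChromaticNumber G k :=
  le_csInf ⟨_, distKColorable_card G k⟩ fun _ hn ↦ DistKColorable.card_le hn hS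

end SimpleGraph

section Corona

variable {α β : Type*} {G : SimpleGraph α} {H : SimpleGraph β}

@[simp]
lemma corona_adj_inl_inl {u v : α} : (corona G H).Adj (.inl u) (.inl v) ↔ G.Adj u v := Iff.rfl

@[simp]
lemma corona_adj_inr_inl {p : α × β} {v : α} : (corona G H).Adj (.inr p) (.inl v) ↔ p.1 = v :=
  Iff.rfl

lemma SimpleGraph.Adj.degree_add_degree_add_le_distChromaticNumber_corona
    [Fintype α] [Fintype β] [DecidableRel G.Adj] (hG : G.CliqueFree 3) {u v : α}
    (huv : G.Adj u v) :
    G.degree u + G.degree v + 2 * Fintype.card β ≤ distChromaticNumber (corona G H) 3 := by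
  classical
  set S : Finset (α ⊕ α × β) :=
    (G.neighborFinset u ∪ G.neighborFinset v).disjSum ({u, v} ×ˢ univ)
  have hcard : S.card = G.degree u + G.degree v + 2 * Fintype.card β := by
    rw [card_disjSum, card_union_of_disjoint (hG.disjoint_neighborFinset_of_adj huv),
      card_product, card_pair huv.ne, card_neighborFinset_eq_degree,
      card_neighborFinset_eq_degree, card_univ]
  have hnear : ∀ s ∈ S,
      (corona G H).edist s (.inl u) ≤ 1 ∨ (corona G H).edist s (.inl v) ≤ 1 := by
    rintro (x | p) hs
    · simp only [S, inl_mem_disjSum, mem_union, mem_neighborFinset] at hs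
      simp only [edist_le_one_iff_adj_or_eq, corona_adj_inl_inl]
      rcases hs with hx | hx
      · exact .inl (.inl hx.symm)
      · exact .inr (.inl hx.symm)
    · simp only [S, inr_mem_disjSum, mem_product, mem_insert, mem_singleton] at hs
      simp only [edist_le_one_iff_adj_or_eq, corona_adj_inr_inl, reduceCtorEq, or_false]
      exact hs.1
  rw [← hcard]
  exact card_le_distChromaticNumber fun s hs t ht ↦
    (corona_adj_inl_inl.mpr huv).edist_le_three (hnear s hs) (hnear t ht)

end Corona

/-- Let `G` be a triangle-free graph with at least one edge, of minimum degree
`δ₁` and maximum degree `Δ₁`, and let `H` be a graph of order `n₂`. Then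
`χ_{≤3}(G ⊙ H) ≥ 2 n₂ + Δ₁ + δ₁`. -/
theorem stmt_5 {α β : Type*} [Fintype α] [Fintype β]
    (G : SimpleGraph α) [DecidableRel G.Adj] (H : SimpleGraph β)
    (htf : G.CliqueFree 3) (he : G.edgeSet.Nonempty) :
    2 * Fintype.card β + G.maxDegree + G.minDegree
      ≤ distChromaticNumber (corona G H) 3 := by
  have hG : G ≠ ⊥ := edgeSet_nonempty.mp he
  obtain ⟨a, -, -⟩ := ne_bot_iff_exists_adj.mp hG
  have : Nonempty α := ⟨a⟩
  obtain ⟨u, hu⟩ := G.exists_maximal_degree_vertex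
  have hdeg : 0 < G.degree u := hu ▸ Nat.pos_of_ne_zero (mt maxDegree_eq_zero_iff.mp hG)
  obtain ⟨v, huv⟩ := (G.degree_pos_iff_exists_adj u).mp hdeg
  have hbound := huv.degree_add_degree_add_le_distChromaticNumber_corona (H := H) htf
  have := G.minDegree_le_degree v
  omega
end

section
/- Let H be a graph of order n₂ and let n₁ ≥ 2. Then for every integer k with 2 ≤ k ≤ n₁, χ_{≤k}(P_{n₁}⊙H) = n₂(k−1) + k + 1 if k ≤ n₁ − 1, and χ_{≤k}(P_{n₁}⊙H) = n₂(k−1) + k if k = n₁. -/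
open SimpleGraph

/-!
In `P_n ⊙ H` path vertices `i, j` are at distance `|i - j|`, and vertices of the copies of `H`
at `i ≠ j` are at distance `|i - j| + 2`. So the `m = min (k + 1) n` path vertices `0, …, m - 1`,
together with the `k - 1` consecutive copies of `H` hanging from the middle of this segment, are
pairwise at distance at most `k` and need distinct colours. Conversely, colouring path vertex `i`
by `i mod m` and vertex `b` of the copy at `i` by `(i mod (k - 1), b)` is a distance-`k`
colouring with exactly that many colours.
-/

namespace SimpleGraph

variable {V W : Type*} {G : SimpleGraph V} {G' : SimpleGraph W}

theorem Walk.apply_le_apply_add_length (ℓ : V → ℕ) (hℓ : ∀ u v, G.Adj u v → ℓ u ≤ ℓ v + 1)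
    {u v : V} (w : G.Walk u v) : ℓ u ≤ ℓ v + w.length := by
  induction w with
  | nil => simp
  | cons h _ ih =>
    have := hℓ _ _ h
    rw [Walk.length_cons]
    omega

theorem Hom.edist_le (f : G →g G') (u v : V) : G'.edist (f u) (f v) ≤ G.edist u v := by
  by_cases h : G.Reachable u v
  · obtain ⟨w, hw⟩ := h.exists_walk_length_eq_edist
    rw [← hw, ← w.length_map f]
    exact (w.map f).edist_le
  · rw [edist_eq_top_of_not_reachable h]
    exact le_top

theorem exists_walk_length_le_of_edist_le {u v : V} {k : ℕ} (h : G.edist u v ≤ k) :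
    ∃ w : G.Walk u v, w.length ≤ k := by
  have hr : G.Reachable u v := reachable_of_edist_ne_top (h.trans_lt (ENat.natCast_lt_top k)).ne
  obtain ⟨w, hw⟩ := hr.exists_walk_length_eq_edist
  exact ⟨w, by rw [← hw] at h; exact_mod_cast h⟩

theorem dist_le_dist_add_one_of_pathGraph_adj {n : ℕ} (j : ℕ) (u v : Fin n)
    (h : (pathGraph n).Adj u v) : Nat.dist u j ≤ Nat.dist v j + 1 := by
  rw [pathGraph_adj] at h
  unfold Nat.dist
  omega

theorem pathGraph_edist_le {n : ℕ} (i j : Fin n) : (pathGraph n).edist i j ≤ Nat.dist i j := by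
  wlog hij : i ≤ j generalizing i j
  · rw [edist_comm, Nat.dist_comm]
    exact this j i (le_of_not_ge hij)
  obtain ⟨d, hd⟩ : ∃ d, j.val = i.val + d := ⟨j - i, by omega⟩
  induction d generalizing j with
  | zero => simp [Fin.ext (by omega : i.val = j.val)]
  | succ d ih =>
    let j' : Fin n := ⟨i + d, by omega⟩
    have hadj : (pathGraph n).Adj j' j := pathGraph_adj.mpr (Or.inl (by simp [j']; omega))
    have hdist : Nat.dist i j = Nat.dist i j' + 1 := by simp only [Nat.dist, j']; omega
    calc (pathGraph n).edist i j ≤ (pathGraph n).edist i j' + (pathGraph n).edist j' j :=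
          SimpleGraph.edist_triangle
      _ ≤ Nat.dist i j' + 1 :=
          add_le_add (ih j' (Fin.mk_le_mk.mpr (by omega)) rfl) (edist_eq_one_iff_adj.mpr hadj).le
      _ = Nat.dist i j := by rw [hdist]; push_cast; rfl

end SimpleGraph

theorem Nat.ModEq.eq_of_dist_lt {m a b : ℕ} (h : a ≡ b [MOD m]) (hd : Nat.dist a b < m) :
    a = b :=
  h.eq_of_abs_lt (by rw [abs_lt]; unfold Nat.dist at hd; omega)

namespace corona

variable {α β : Type*} {G : SimpleGraph α} {H : SimpleGraph β}

def inlHom (G : SimpleGraph α) (H : SimpleGraph β) : G →g corona G H := ⟨Sum.inl, id⟩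

theorem edist_inl_inl_le (u v : α) :
    (corona G H).edist (.inl u) (.inl v) ≤ G.edist u v :=
  (inlHom G H).edist_le u v

theorem edist_inl_inr_le (u v : α) (b : β) :
    (corona G H).edist (.inl u) (.inr (v, b)) ≤ G.edist u v + 1 :=
  (SimpleGraph.edist_triangle (v := .inl v)).trans
    (add_le_add (edist_inl_inl_le u v) (edist_eq_one_iff_adj.mpr rfl).le)

theorem edist_inr_inr_le (u v : α) (a b : β) :
    (corona G H).edist (.inr (u, a)) (.inr (v, b)) ≤ G.edist u v + 2 :=
  calc (corona G H).edist (.inr (u, a)) (.inr (v, b))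
      ≤ (corona G H).edist (.inr (u, a)) (.inl u) + (corona G H).edist (.inl u) (.inr (v, b)) :=
        SimpleGraph.edist_triangle
    _ ≤ 1 + (G.edist u v + 1) :=
        add_le_add (edist_eq_one_iff_adj.mpr rfl).le (edist_inl_inr_le u v b)
    _ = G.edist u v + 2 := by ring

variable [DecidableEq α]

/-- When `f` is the distance to `j` in `G`, this is the distance to the `j`-th copy of `H`. -/
def potential (f : α → ℕ) (j : α) : α ⊕ α × β → ℕ
  | .inl u => f u + 1
  | .inr p => if p.1 = j then 0 else f p.1 + 2

variable {f : α → ℕ} {j : α}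

theorem potential_le_add_one (hf : ∀ u v, G.Adj u v → f u ≤ f v + 1) (hj : f j = 0)
    (x y : α ⊕ α × β) (h : (corona G H).Adj x y) : potential f j x ≤ potential f j y + 1 := by
  rcases x with u | ⟨u, a⟩ <;> rcases y with v | ⟨v, b⟩
  · exact Nat.add_le_add_right (hf u v h) 1
  · obtain rfl : u = v := h
    by_cases hu : u = j <;> simp [potential, hu, hj]
  · obtain rfl : u = v := h
    by_cases hu : u = j <;> simp [potential, hu]
  · obtain rfl : u = v := h.1
    simp [potential]

theorem le_length_of_walk_inl_inl (hf : ∀ u v, G.Adj u v → f u ≤ f v + 1) (hj : f j = 0)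
    {i : α} (w : (corona G H).Walk (.inl i) (.inl j)) : f i ≤ w.length := by
  have := w.apply_le_apply_add_length _ (potential_le_add_one hf hj)
  simp only [potential, hj] at this
  omega

theorem add_two_le_length_of_walk_inr_inr (hf : ∀ u v, G.Adj u v → f u ≤ f v + 1) (hj : f j = 0)
    {i : α} (hij : i ≠ j) {a b : β} (w : (corona G H).Walk (.inr (i, a)) (.inr (j, b))) :
    f i + 2 ≤ w.length := by
  have := w.apply_le_apply_add_length _ (potential_le_add_one hf hj)
  simpa [potential, hij] using this

end corona

section DistColoring

variable {α C : Type*} [Fintype C] {G : SimpleGraph α} {k : ℕ}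

theorem distKColorable_card_s7 (c : α → C)
    (hc : ∀ u v, u ≠ v → (∃ w : G.Walk u v, w.length ≤ k) → c u ≠ c v) :
    DistKColorable G k (Fintype.card C) :=
  ⟨Fintype.equivFin C ∘ c, fun u v huv hw h => hc u v huv hw ((Fintype.equivFin C).injective h)⟩

theorem DistKColorable.card_le_of_injective {n : ℕ} (hG : DistKColorable G k n) (ι : C → α)
    (hι : Function.Injective ι)
    (hclose : ∀ x y, x ≠ y → ∃ w : G.Walk (ι x) (ι y), w.length ≤ k) :
    Fintype.card C ≤ n := by
  obtain ⟨c, hc⟩ := hG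
  have hinj : Function.Injective (c ∘ ι) := fun x y h =>
    by_contra fun hxy => hc _ _ (hι.ne hxy) (hclose x y hxy) h
  simpa using Fintype.card_le_of_injective _ hinj

theorem distChromaticNumber_eq_card (c : α → C)
    (hc : ∀ u v, u ≠ v → (∃ w : G.Walk u v, w.length ≤ k) → c u ≠ c v) (ι : C → α)
    (hι : Function.Injective ι)
    (hclose : ∀ x y, x ≠ y → ∃ w : G.Walk (ι x) (ι y), w.length ≤ k) :
    distChromaticNumber G k = Fintype.card C := by
  have hcol := distKColorable_card_s7 c hc
  refine le_antisymm (Nat.sInf_le hcol) ?_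
  have hmin : DistKColorable G k (distChromaticNumber G k) :=
    Nat.sInf_mem (s := {n | DistKColorable G k n}) ⟨_, hcol⟩
  exact hmin.card_le_of_injective ι hι hclose

end DistColoring

namespace pathCorona

variable {β : Type*} {H : SimpleGraph β} {n k : ℕ}

def coloring (hk : 2 ≤ k) : Fin n ⊕ Fin n × β → Fin (min (k + 1) n) ⊕ Fin (k - 1) × β
  | .inl i => .inl ⟨i % min (k + 1) n, Nat.mod_lt _ (by have := i.isLt; omega)⟩
  | .inr (i, b) => .inr (⟨i % (k - 1), Nat.mod_lt _ (by omega)⟩, b)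

/-- The copies of `H` sit at the path vertices `s, …, s + k - 2`, where `s = 1` if `k < n`
and `s = 0` if `k = n`. -/
def clique (hkn : k ≤ n) : Fin (min (k + 1) n) ⊕ Fin (k - 1) × β → Fin n ⊕ Fin n × β
  | .inl t => .inl ⟨t, by omega⟩
  | .inr (t, b) => .inr (⟨t + (min (k + 1) n - k), by omega⟩, b)

theorem coloring_ne (hk : 2 ≤ k) (u v : Fin n ⊕ Fin n × β) (huv : u ≠ v)
    (hw : ∃ w : (corona (pathGraph n) H).Walk u v, w.length ≤ k) :
    coloring hk u ≠ coloring hk v := by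
  obtain ⟨w, hw⟩ := hw
  intro hc
  rcases u with i | ⟨i, a⟩ <;> rcases v with j | ⟨j, b⟩ <;> simp only [coloring, Sum.inl.injEq,
    Sum.inr.injEq, Prod.mk.injEq, Fin.mk.injEq, reduceCtorEq] at hc
  · have hlen := corona.le_length_of_walk_inl_inl
      (dist_le_dist_add_one_of_pathGraph_adj j) (Nat.dist_self j) w
    refine huv (congrArg Sum.inl (Fin.ext (Nat.ModEq.eq_of_dist_lt hc ?_)))
    have := i.isLt; have := j.isLt
    unfold Nat.dist at *
    omega
  · obtain ⟨hc, rfl⟩ := hc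
    have hij : i ≠ j := fun h => huv (by rw [h])
    have hlen := corona.add_two_le_length_of_walk_inr_inr
      (dist_le_dist_add_one_of_pathGraph_adj j) (Nat.dist_self j) hij w
    exact hij (Fin.ext (Nat.ModEq.eq_of_dist_lt hc (by omega)))

theorem clique_injective (hkn : k ≤ n) : Function.Injective (clique (β := β) hkn) := by
  rintro (s | ⟨s, a⟩) (t | ⟨t, b⟩) h <;>
    simp only [clique, Sum.inl.injEq, Sum.inr.injEq, Prod.mk.injEq, Fin.mk.injEq,
      reduceCtorEq] at h
  · rw [Fin.ext h]
  · rw [Fin.ext (by omega : s.val = t.val), h.2]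

theorem clique_edist_le (hk : 2 ≤ k) (hkn : k ≤ n) (x y : Fin (min (k + 1) n) ⊕ Fin (k - 1) × β) :
    (corona (pathGraph n) H).edist (clique hkn x) (clique hkn y) ≤ k := by
  wlog hxy : x.isLeft ∨ y.isRight generalizing x y
  · rw [edist_comm]
    exact this y x (by cases x <;> cases y <;> simp_all)
  rcases x with s | ⟨s, a⟩ <;> rcases y with t | ⟨t, b⟩ <;> simp only [Sum.isLeft_inl,
    Sum.isRight_inl, Sum.isLeft_inr, Sum.isRight_inr, or_false, or_true, Bool.false_eq_true] at hxy
  · refine (corona.edist_inl_inl_le _ _).trans ((pathGraph_edist_le _ _).trans ?_)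
    have := s.isLt; have := t.isLt
    exact_mod_cast (by unfold Nat.dist; omega : Nat.dist s t ≤ k)
  · refine (corona.edist_inl_inr_le _ _ b).trans ?_
    refine (add_le_add (pathGraph_edist_le _ _) le_rfl).trans ?_
    have := s.isLt; have := t.isLt
    exact_mod_cast (by simp only [Nat.dist]; omega : Nat.dist s (t + (min (k + 1) n - k)) + 1 ≤ k)
  · refine (corona.edist_inr_inr_le _ _ a b).trans ?_
    refine (add_le_add (pathGraph_edist_le _ _) le_rfl).trans ?_
    have := s.isLt; have := t.isLt
    exact_mod_cast (by simp only [Nat.dist]; omega :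
      Nat.dist (s + (min (k + 1) n - k)) (t + (min (k + 1) n - k)) + 2 ≤ k)

end pathCorona

theorem distChromaticNumber_corona_pathGraph {β : Type*} [Fintype β] (H : SimpleGraph β)
    {n k : ℕ} (hk : 2 ≤ k) (hkn : k ≤ n) :
    distChromaticNumber (corona (pathGraph n) H) k = Fintype.card β * (k - 1) + min (k + 1) n := by
  rw [distChromaticNumber_eq_card (pathCorona.coloring hk) (pathCorona.coloring_ne hk)
    (pathCorona.clique hkn) (pathCorona.clique_injective hkn)
    (fun x y _ => exists_walk_length_le_of_edist_le (pathCorona.clique_edist_le hk hkn x y))]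
  simp only [Fintype.card_sum, Fintype.card_fin, Fintype.card_prod]
  ring

theorem stmt_7_general {β : Type*} [Fintype β] (H : SimpleGraph β) (n₁ : ℕ)
    (k : ℕ) (hk2 : 2 ≤ k) (hkn : k ≤ n₁) :
    (k ≤ n₁ - 1 →
      distChromaticNumber (corona (SimpleGraph.pathGraph n₁) H) k
        = Fintype.card β * (k - 1) + k + 1) ∧
    (k = n₁ →
      distChromaticNumber (corona (SimpleGraph.pathGraph n₁) H) k
        = Fintype.card β * (k - 1) + k) := by
  rw [distChromaticNumber_corona_pathGraph H hk2 hkn]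
  omega

/-- Let `H` be a graph of order `n₂` and `n₁ ≥ 2`. Then for every `2 ≤ k ≤ n₁`,
`χ_{≤k}(P_{n₁} ⊙ H) = n₂(k-1) + k + 1` if `k ≤ n₁ - 1`, and
`χ_{≤k}(P_{n₁} ⊙ H) = n₂(k-1) + k` if `k = n₁`. -/
theorem stmt_7 {β : Type*} [Fintype β] (H : SimpleGraph β) (n₁ : ℕ) (hn : 2 ≤ n₁)
    (k : ℕ) (hk2 : 2 ≤ k) (hkn : k ≤ n₁) :
    (k ≤ n₁ - 1 →
      distChromaticNumber (corona (SimpleGraph.pathGraph n₁) H) k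
        = Fintype.card β * (k - 1) + k + 1) ∧
    (k = n₁ →
      distChromaticNumber (corona (SimpleGraph.pathGraph n₁) H) k
        = Fintype.card β * (k - 1) + k) :=
  stmt_7_general H n₁ k hk2 hkn
end

section
/- Let G be a graph of order n₁ ≥ 1 and let H be a graph of order n₂ ≥ 2. Then the Roman domination number of the corona product satisfies γ_R(G⊙H) = 2n₁. -/
open SimpleGraph

/-- A Roman dominating function on `G`: a map `f : V → {0,1,2}` such that every
vertex with value `0` is adjacent to a vertex with value `2`. -/
def IsRomanDominating {α : Type*} (G : SimpleGraph α) (f : α → Fin 3) : Prop :=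
  ∀ v : α, f v = 0 → ∃ u : α, G.Adj v u ∧ f u = 2

/-- The Roman domination number of `G`: the minimum weight of a Roman
dominating function on `G`. -/
noncomputable def romanDominationNumber {α : Type*} [Fintype α] (G : SimpleGraph α) : ℕ :=
  sInf {w | ∃ f : α → Fin 3, IsRomanDominating G f ∧ ∑ v : α, (f v : ℕ) = w}

/-! Every vertex `(u, b)` of the `u`-th copy of `H` is dominated only from inside the closed
fibre `{u} ∪ {u} × β`, which has at least two vertices; so each fibre carries weight at least
`2`, and the fibres partition the vertex set. Conversely, weight `2` on every vertex of `G`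
and `0` elsewhere is Roman dominating. -/

section RomanDomination

variable {V : Type*} {G : SimpleGraph V}

theorem isRomanDominating_const_two : IsRomanDominating G fun _ => 2 := by
  intro v hv
  simp at hv

theorem romanDominationNumber_le [Fintype V] {f : V → Fin 3} (hf : IsRomanDominating G f) :
    romanDominationNumber G ≤ ∑ v, (f v : ℕ) :=
  Nat.sInf_le ⟨f, hf, rfl⟩

theorem le_romanDominationNumber [Fintype V] {w : ℕ}
    (h : ∀ f : V → Fin 3, IsRomanDominating G f → w ≤ ∑ v, (f v : ℕ)) :
    w ≤ romanDominationNumber G :=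
  le_csInf ⟨_, _, isRomanDominating_const_two, rfl⟩ fun _ ⟨f, hf, hw⟩ => hw ▸ h f hf

end RomanDomination

section Corona

variable {α β : Type*} {G : SimpleGraph α} {H : SimpleGraph β}

theorem corona_adj_inr {u : α} {b : β} {x : α ⊕ α × β} (h : (corona G H).Adj (.inr (u, b)) x) :
    x = .inl u ∨ ∃ b', x = .inr (u, b') := by
  rcases x with v | ⟨v, b'⟩
  · exact .inl (congrArg Sum.inl h.symm)
  · exact .inr ⟨b', by rw [show v = u from h.1.symm]⟩

theorem isRomanDominating_corona_elim :
    IsRomanDominating (corona G H) (Sum.elim (fun _ => 2) fun _ => 0) := by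
  rintro (u | p) h
  · simp at h
  · exact ⟨.inl p.1, rfl, rfl⟩

theorem two_le_corona_fibre_weight [Fintype β] (hβ : 2 ≤ Fintype.card β)
    {f : α ⊕ α × β → Fin 3} (hf : IsRomanDominating (corona G H) f) (u : α) :
    2 ≤ (f (.inl u) : ℕ) + ∑ b, (f (.inr (u, b)) : ℕ) := by
  by_cases hzero : ∃ b, f (.inr (u, b)) = 0
  · obtain ⟨b, hb⟩ := hzero
    obtain ⟨x, hadj, hx⟩ := hf _ hb
    rcases corona_adj_inr hadj with rfl | ⟨b', rfl⟩
    · rw [hx]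
      exact Nat.le_add_right _ _
    · have hle := Finset.single_le_sum (f := fun b => (f (.inr (u, b)) : ℕ))
        (fun _ _ => Nat.zero_le _) (Finset.mem_univ b')
      simp only [hx, Fin.val_two] at hle
      omega
  · push Not at hzero
    have hpos : ∀ b, 1 ≤ (f (.inr (u, b)) : ℕ) := fun b =>
      Nat.one_le_iff_ne_zero.2 (Fin.val_ne_zero_iff.2 (hzero b))
    calc 2 ≤ ∑ _b : β, 1 := by simpa using hβ
      _ ≤ ∑ b, (f (.inr (u, b)) : ℕ) := Finset.sum_le_sum fun b _ => hpos b
      _ ≤ _ := Nat.le_add_left _ _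

theorem sum_corona_eq_sum_fibres [Fintype α] [Fintype β] (f : α ⊕ α × β → ℕ) :
    ∑ v, f v = ∑ u, (f (.inl u) + ∑ b, f (.inr (u, b))) := by
  rw [Fintype.sum_sum_type, Finset.sum_add_distrib, Fintype.sum_prod_type]

end Corona

theorem stmt_8_general {α β : Type*} [Fintype α] [Fintype β]
    (G : SimpleGraph α) (H : SimpleGraph β)
    (h2 : 2 ≤ Fintype.card β) :
    romanDominationNumber (corona G H) = 2 * Fintype.card α := by
  have hweight : ∑ v, ((Sum.elim (fun _ => 2) fun _ => 0 : α ⊕ α × β → Fin 3) v : ℕ) =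
      2 * Fintype.card α := by
    simp [Fintype.sum_sum_type, mul_comm]
  refine le_antisymm (hweight ▸ romanDominationNumber_le isRomanDominating_corona_elim) ?_
  refine le_romanDominationNumber fun f hf => ?_
  calc 2 * Fintype.card α = ∑ _u : α, 2 := by simp [mul_comm]
    _ ≤ ∑ u, ((f (.inl u) : ℕ) + ∑ b, (f (.inr (u, b)) : ℕ)) :=
      Finset.sum_le_sum fun u _ => two_le_corona_fibre_weight h2 hf u
    _ = ∑ v, (f v : ℕ) := (sum_corona_eq_sum_fibres fun v => (f v : ℕ)).symm

/-- Let `G` be a graph of order `n₁ ≥ 1` and `H` a graph of order `n₂ ≥ 2`.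
Then `γ_R(G ⊙ H) = 2 n₁`. -/
theorem stmt_8 {α β : Type*} [Fintype α] [Fintype β]
    (G : SimpleGraph α) (H : SimpleGraph β)
    (h1 : 1 ≤ Fintype.card α) (h2 : 2 ≤ Fintype.card β) :
    romanDominationNumber (corona G H) = 2 * Fintype.card α :=
  stmt_8_general G H h2
end

section
/- Let G be a graph of order n ≥ 2 that has at least one edge (i.e., G is different from the empty graph on n vertices). Then γ_R(G) + n/2 ≤ γ_R(G⊙K₁) ≤ γ_R(G) + n − 1 (the lower bound meaning 2·γ_R(G⊙K₁) ≥ 2·γ_R(G) + n). -/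
open SimpleGraph

/-! The extension `f ↦ (f, 1 - [f = 2])` of a Roman dominating function of `G` to the pendant
vertices of `G ⊙ K₁` costs at most `n - 1` once `f` takes the value `2` somewhere, and a graph
with an edge has a minimum-weight Roman dominating function that does. Conversely, a Roman
dominating function `g` of `G ⊙ K₁` collapses vertexwise to a Roman dominating function `f` of `G`
with `f v + 2 ≤ 2 (g v + g v')`, `v'` the pendant of `v`; summing gives `γ_R(G) + 2n ≤ 2 γ_R(G ⊙ K₁)`,
and `γ_R(G) ≤ n` yields the lower bound. -/

open Finset

namespace SimpleGraph

section RomanDomination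

variable {α : Type*} [Fintype α] (G : SimpleGraph α)

lemma romanDominationNumber_le {f : α → Fin 3} (hf : IsRomanDominating G f) :
    romanDominationNumber G ≤ ∑ v, (f v : ℕ) :=
  Nat.sInf_le ⟨f, hf, rfl⟩

omit [Fintype α] in
lemma isRomanDominating_one : IsRomanDominating G 1 :=
  fun _ h => absurd h one_ne_zero

lemma exists_sum_eq_romanDominationNumber :
    ∃ f : α → Fin 3, IsRomanDominating G f ∧ ∑ v, (f v : ℕ) = romanDominationNumber G :=
  Nat.sInf_mem (s := {w | ∃ f : α → Fin 3, IsRomanDominating G f ∧ ∑ v, (f v : ℕ) = w})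
    ⟨_, 1, isRomanDominating_one G, rfl⟩

lemma romanDominationNumber_le_card : romanDominationNumber G ≤ Fintype.card α := by
  simpa using romanDominationNumber_le G (isRomanDominating_one G)

/-- Across an edge `uv`: `2` on `u`, `0` on `v` and `1` elsewhere. -/
lemma exists_isRomanDominating_sum_le_card [DecidableEq α] {u v : α} (huv : G.Adj u v) :
    ∃ f : α → Fin 3, IsRomanDominating G f ∧ f u = 2 ∧ ∑ w, (f w : ℕ) ≤ Fintype.card α := by
  have hvu : v ≠ u := huv.ne.symm
  let f : α → Fin 3 := fun w => if w = v then 0 else if w = u then 2 else 1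
  refine ⟨f, ?_, by simp [f, hvu.symm], ?_⟩
  · intro w hw
    have hwv : w = v := by
      by_contra hwv
      by_cases hwu : w = u <;> simp [f, hwv, hwu, hvu.symm] at hw
    exact ⟨u, hwv ▸ huv.symm, by simp [f, hvu.symm]⟩
  · have hpoint : ∀ w, (f w : ℕ) + (if w = v then 1 else 0) ≤ 1 + (if w = u then 1 else 0) := by
      intro w
      by_cases hwv : w = v
      · simp [f, hwv]
      · by_cases hwu : w = u <;> simp [f, hwv, hwu, hvu.symm]
    have hsum := sum_le_sum fun w (_ : w ∈ univ) => hpoint w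
    simp only [sum_add_distrib, sum_ite_eq', mem_univ, if_true, sum_const, card_univ,
      smul_eq_mul, mul_one] at hsum
    omega

/-- A minimum `f` without a value `2` is constantly `1`, so `γ_R(G) = n` and the function of
`exists_isRomanDominating_sum_le_card` is also minimum. -/
lemma exists_isRomanDominating_sum_le_romanDominationNumber {u v : α} (huv : G.Adj u v) :
    ∃ f : α → Fin 3, IsRomanDominating G f ∧ (∃ w, f w = 2) ∧
      ∑ w, (f w : ℕ) ≤ romanDominationNumber G := by
  classical
  obtain ⟨f, hf, hsum⟩ := exists_sum_eq_romanDominationNumber G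
  by_cases htwo : ∃ w, f w = 2
  · exact ⟨f, hf, htwo, hsum.le⟩
  push Not at htwo
  have hone : ∀ w, f w = 1 := fun w => by
    have h0 : f w ≠ 0 := fun h => (hf w h).elim fun x hx => htwo x hx.2
    have hFin3 : ∀ x : Fin 3, x ≠ 0 → x ≠ 2 → x = 1 := by decide
    exact hFin3 _ h0 (htwo w)
  obtain ⟨f', hf', hu, hsum'⟩ := exists_isRomanDominating_sum_le_card G huv
  refine ⟨f', hf', ⟨u, hu⟩, hsum'.trans ?_⟩
  simp [← hsum, hone]

end RomanDomination

section Corona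

variable {α : Type*} (G : SimpleGraph α)

local notation:max G:max "⊙K₁" => corona G (⊥ : SimpleGraph (Fin 1))

lemma coronaK₁_adj_inr {p : α × Fin 1} {x : α ⊕ α × Fin 1} :
    (G⊙K₁).Adj (Sum.inr p) x ↔ x = Sum.inl p.1 := by
  rcases x with v | q
  · exact ⟨fun h => congrArg Sum.inl h.symm, fun h => (Sum.inl_injective h).symm⟩
  · simp [corona]

lemma sum_sum_prod_fin_one [Fintype α] {M : Type*} [AddCommMonoid M] (w : α ⊕ α × Fin 1 → M) :
    ∑ x, w x = ∑ v, w (Sum.inl v) + ∑ v, w (Sum.inr (v, 0)) := by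
  simp [Fintype.sum_sum_type, Fintype.sum_prod_type]

def coronaExtend (f : α → Fin 3) : α ⊕ α × Fin 1 → Fin 3 :=
  Sum.elim f fun p => if f p.1 = 2 then 0 else 1

variable {G}

lemma IsRomanDominating.coronaExtend {f : α → Fin 3} (hf : IsRomanDominating G f) :
    IsRomanDominating (G⊙K₁) (coronaExtend f) := by
  rintro (v | p) h
  · obtain ⟨u, hvu, hu⟩ := hf v h
    exact ⟨Sum.inl u, hvu, hu⟩
  · refine ⟨Sum.inl p.1, (coronaK₁_adj_inr G).2 rfl, ?_⟩
    change f p.1 = 2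
    by_contra hp
    simp [SimpleGraph.coronaExtend, hp] at h

lemma sum_coronaExtend [Fintype α] (f : α → Fin 3) :
    ∑ x, (coronaExtend f x : ℕ) = ∑ v, (f v : ℕ) + #{v | f v ≠ 2} := by
  rw [sum_sum_prod_fin_one, card_filter]
  congr 1
  refine sum_congr rfl fun v _ => ?_
  by_cases hv : f v = 2 <;> simp [coronaExtend, hv]

lemma romanDominationNumber_coronaK₁_lt [Fintype α] {f : α → Fin 3}
    (hf : IsRomanDominating G f) {u : α} (hu : f u = 2) :
    romanDominationNumber (G⊙K₁) < ∑ v, (f v : ℕ) + Fintype.card α := by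
  have hcard : #{v | f v ≠ 2} < Fintype.card α :=
    card_lt_univ_of_notMem (x := u) (by simp [hu])
  have := romanDominationNumber_le _ hf.coronaExtend
  rw [sum_coronaExtend] at this
  omega

def collapsePair (a b : Fin 3) : Fin 3 :=
  if a = 2 then 2 else if 2 ≤ (a : ℕ) + b then 1 else 0

lemma collapsePair_add_two_le :
    ∀ a b : Fin 3, (b = 0 → a = 2) → (collapsePair a b : ℕ) + 2 ≤ 2 * (a + b) := by
  decide

lemma collapsePair_eq_zero :
    ∀ a b : Fin 3, (b = 0 → a = 2) → collapsePair a b = 0 → a = 0 ∧ b ≠ 2 := by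
  decide

lemma collapsePair_two (b : Fin 3) : collapsePair 2 b = 2 := rfl

def coronaCollapse (g : α ⊕ α × Fin 1 → Fin 3) (v : α) : Fin 3 :=
  collapsePair (g (Sum.inl v)) (g (Sum.inr (v, 0)))

lemma IsRomanDominating.coronaK₁_pendant {g : α ⊕ α × Fin 1 → Fin 3}
    (hg : IsRomanDominating (G⊙K₁) g) (v : α) :
    g (Sum.inr (v, 0)) = 0 → g (Sum.inl v) = 2 := fun h => by
  obtain ⟨x, hx, hgx⟩ := hg _ h
  rwa [(coronaK₁_adj_inr G).1 hx] at hgx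

lemma IsRomanDominating.coronaCollapse {g : α ⊕ α × Fin 1 → Fin 3}
    (hg : IsRomanDominating (G⊙K₁) g) : IsRomanDominating G (coronaCollapse g) := by
  intro v hv
  obtain ⟨hv0, hpendant⟩ := collapsePair_eq_zero _ _ (hg.coronaK₁_pendant v) hv
  obtain ⟨x | p, hx, hgx⟩ := hg _ hv0
  · exact ⟨x, hx, hgx ▸ collapsePair_two _⟩
  · have hp : p = (v, 0) := Prod.ext ((Sum.inl_injective ((coronaK₁_adj_inr G).1 hx.symm)).symm)
      (Subsingleton.elim _ _)
    exact absurd (hp ▸ hgx) hpendant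

lemma romanDominationNumber_add_two_mul_card_le [Fintype α] :
    romanDominationNumber G + 2 * Fintype.card α ≤ 2 * romanDominationNumber (G⊙K₁) := by
  obtain ⟨g, hg, hsum⟩ := exists_sum_eq_romanDominationNumber (G⊙K₁)
  have hpoint : ∀ v, (coronaCollapse g v : ℕ) + 2 ≤ 2 * (g (Sum.inl v) + g (Sum.inr (v, 0))) :=
    fun v => collapsePair_add_two_le _ _ (hg.coronaK₁_pendant v)
  calc romanDominationNumber G + 2 * Fintype.card α
      ≤ ∑ v, ((coronaCollapse g v : ℕ) + 2) := by
        rw [sum_add_distrib, sum_const, card_univ, smul_eq_mul, mul_comm]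
        exact Nat.add_le_add_right (romanDominationNumber_le G hg.coronaCollapse) _
    _ ≤ ∑ v, 2 * ((g (Sum.inl v) : ℕ) + g (Sum.inr (v, 0))) := sum_le_sum fun v _ => hpoint v
    _ = 2 * romanDominationNumber (G⊙K₁) := by
        rw [← mul_sum, sum_add_distrib, ← hsum, sum_sum_prod_fin_one fun x => (g x : ℕ)]

end Corona

end SimpleGraph

theorem stmt_10_general {α : Type*} [Fintype α] (G : SimpleGraph α)
    (he : G.edgeSet.Nonempty) :
    2 * romanDominationNumber G + Fintype.card α
        ≤ 2 * romanDominationNumber (corona G (⊥ : SimpleGraph (Fin 1))) ∧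
      romanDominationNumber (corona G (⊥ : SimpleGraph (Fin 1)))
        ≤ romanDominationNumber G + Fintype.card α - 1 := by
  obtain ⟨u, v, huv⟩ := ne_bot_iff_exists_adj.1 (edgeSet_nonempty.1 he)
  obtain ⟨f, hf, ⟨w, hw⟩, hsum⟩ := G.exists_isRomanDominating_sum_le_romanDominationNumber huv
  have hlower := G.romanDominationNumber_add_two_mul_card_le
  have hupper := romanDominationNumber_coronaK₁_lt hf hw
  have hcard := G.romanDominationNumber_le_card
  constructor <;> omega

/-- Let `G` be a graph of order `n ≥ 2` with at least one edge. Then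
`γ_R(G) + n/2 ≤ γ_R(G ⊙ K₁) ≤ γ_R(G) + n - 1`, the lower bound meaning
`2 γ_R(G ⊙ K₁) ≥ 2 γ_R(G) + n`. -/
theorem stmt_10 {α : Type*} [Fintype α] (G : SimpleGraph α)
    (hn : 2 ≤ Fintype.card α) (he : G.edgeSet.Nonempty) :
    2 * romanDominationNumber G + Fintype.card α
        ≤ 2 * romanDominationNumber (corona G (⊥ : SimpleGraph (Fin 1))) ∧
      romanDominationNumber (corona G (⊥ : SimpleGraph (Fin 1)))
        ≤ romanDominationNumber G + Fintype.card α - 1 :=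
  stmt_10_general G he
end

section
/- Let G be a connected graph of order n and let H be any graph with at least one vertex. Then the independent domination number of the corona product satisfies i(G⊙H) = n·i(H) − β₀(G)·(i(H) − 1), where β₀(G) is the independence number of G. -/
open SimpleGraph

/-- `D` is a dominating set of `G`: every vertex outside `D` has a neighbor in `D`. -/
def IsDominatingSet {α : Type*} (G : SimpleGraph α) (D : Set α) : Prop :=
  ∀ v ∉ D, ∃ u ∈ D, G.Adj v u

/-- The domination number of `G`. -/
noncomputable def dominationNumber {α : Type*} (G : SimpleGraph α) : ℕ :=
  sInf {n | ∃ D : Set α, IsDominatingSet G D ∧ D.ncard = n}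

/-- `S` is an independent set of `G`: no two of its vertices are adjacent. -/
def IsIndependentSet {α : Type*} (G : SimpleGraph α) (S : Set α) : Prop :=
  ∀ u ∈ S, ∀ v ∈ S, ¬ G.Adj u v

/-- The independence number of `G`: the maximum cardinality of an independent set. -/
noncomputable def independenceNumber {α : Type*} (G : SimpleGraph α) : ℕ :=
  sSup {n | ∃ S : Set α, IsIndependentSet G S ∧ S.ncard = n}

/-- The independent domination number of `G`: the minimum cardinality of a set
that is both independent and dominating. -/
noncomputable def independentDominationNumber {α : Type*} (G : SimpleGraph α) : ℕ :=
  sInf {n | ∃ S : Set α, IsIndependentSet G S ∧ IsDominatingSet G S ∧ S.ncard = n}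

/-!
An independent dominating set `T` of `G ⊙ H` meets `G` in an independent set `A` of `G`.
For every vertex `v ∉ A`, the vertices of the `v`-th copy of `H` can only be dominated from
inside that copy, so `T` restricts there to an independent dominating set of `H`; hence
`|T| ≥ |A| + (n - |A|)·i(H) ≥ β₀(G) + (n - β₀(G))·i(H)`, since `i(H) ≥ 1`. Conversely a
maximum independent set `A` of `G` together with a minimum independent dominating set of `H` in each
copy over a vertex outside `A` is an independent dominating set of exactly that size.
-/

lemma independentDominationNumber_le_ncard {V : Type*} {G : SimpleGraph V} {S : Set V}
    (hind : IsIndependentSet G S) (hdom : IsDominatingSet G S) :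
    independentDominationNumber G ≤ S.ncard :=
  Nat.sInf_le ⟨S, hind, hdom, rfl⟩

lemma IsDominatingSet.nonempty {V : Type*} [Nonempty V] {G : SimpleGraph V} {S : Set V}
    (hS : IsDominatingSet G S) : S.Nonempty := by
  by_contra! h
  obtain ⟨u, hu, -⟩ := hS (Classical.arbitrary V) (by simp [h])
  simp [h] at hu

section Finite

variable {V : Type*} [Finite V]

lemma bddAbove_independentSet_ncard (G : SimpleGraph V) :
    BddAbove {n | ∃ S : Set V, IsIndependentSet G S ∧ S.ncard = n} :=
  ⟨Nat.card V, by rintro n ⟨S, -, rfl⟩; exact Set.ncard_le_card S⟩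

lemma IsIndependentSet.ncard_le_independenceNumber {G : SimpleGraph V} {S : Set V}
    (hS : IsIndependentSet G S) : S.ncard ≤ independenceNumber G :=
  le_csSup (bddAbove_independentSet_ncard G) ⟨S, hS, rfl⟩

lemma exists_isIndependentSet_ncard_eq_independenceNumber (G : SimpleGraph V) :
    ∃ S : Set V, IsIndependentSet G S ∧ S.ncard = independenceNumber G :=
  Nat.sSup_mem (s := {n | ∃ S : Set V, IsIndependentSet G S ∧ S.ncard = n})
    ⟨0, ∅, by simp [IsIndependentSet]⟩ (bddAbove_independentSet_ncard G)

lemma IsIndependentSet.isDominatingSet_of_ncard_eq_independenceNumber {G : SimpleGraph V}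
    {S : Set V} (hS : IsIndependentSet G S) (hcard : S.ncard = independenceNumber G) :
    IsDominatingSet G S := by
  intro v hv
  by_contra! hno
  have hvS : IsIndependentSet G (insert v S) := by
    rintro u (rfl | hu) w (rfl | hw) hadj
    · exact G.irrefl hadj
    · exact hno w hw hadj
    · exact hno u hu hadj.symm
    · exact hS u hu w hw hadj
  have := hvS.ncard_le_independenceNumber
  rw [Set.ncard_insert_of_notMem hv] at this
  omega

lemma exists_isIndependentSet_isDominatingSet_ncard_eq (G : SimpleGraph V) :
    ∃ S : Set V, IsIndependentSet G S ∧ IsDominatingSet G S ∧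
      S.ncard = independentDominationNumber G := by
  obtain ⟨S, hS, hcard⟩ := exists_isIndependentSet_ncard_eq_independenceNumber G
  exact Nat.sInf_mem
    (s := {n | ∃ S : Set V, IsIndependentSet G S ∧ IsDominatingSet G S ∧ S.ncard = n})
    ⟨_, S, hS, hS.isDominatingSet_of_ncard_eq_independenceNumber hcard, rfl⟩

lemma one_le_independentDominationNumber [Nonempty V] (G : SimpleGraph V) :
    1 ≤ independentDominationNumber G := by
  obtain ⟨S, -, hdom, hcard⟩ := exists_isIndependentSet_isDominatingSet_ncard_eq G
  exact hcard ▸ (Set.ncard_pos (Set.toFinite S)).mpr hdom.nonempty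

end Finite

lemma add_sub_mul_eq_mul_sub_mul {a n i : ℕ} (ha : a ≤ n) (hi : 1 ≤ i) :
    a + (n - a) * i = n * i - a * (i - 1) := by
  obtain ⟨m, rfl⟩ := Nat.exists_eq_add_of_le ha
  obtain ⟨j, rfl⟩ := Nat.exists_eq_add_of_le hi
  refine (Nat.sub_eq_of_eq_add ?_).symm
  simp only [Nat.add_sub_cancel_left]
  ring

section Corona

variable {α β : Type*} {G : SimpleGraph α} {H : SimpleGraph β}

lemma ncard_eq_ncard_preimage_inl_add_sum [Fintype α] [Finite β] (S : Set (α ⊕ α × β)) :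
    S.ncard = (Sum.inl ⁻¹' S).ncard + ∑ v : α, {b | Sum.inr (v, b) ∈ S}.ncard := by
  have e : S ≃ (Sum.inl ⁻¹' S) ⊕ (Σ v : α, {b | Sum.inr (v, b) ∈ S}) :=
    { toFun
        | ⟨Sum.inl v, h⟩ => Sum.inl ⟨v, h⟩
        | ⟨Sum.inr p, h⟩ => Sum.inr ⟨p.1, p.2, h⟩
      invFun
        | Sum.inl ⟨v, h⟩ => ⟨Sum.inl v, h⟩
        | Sum.inr ⟨v, b, h⟩ => ⟨Sum.inr (v, b), h⟩
      left_inv := by rintro ⟨v | ⟨v, b⟩, h⟩ <;> rfl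
      right_inv := by rintro (⟨v, h⟩ | ⟨v, b, h⟩) <;> rfl }
  have := Finite.of_fintype α
  simpa [Nat.card_sum, Nat.card_sigma] using Nat.card_congr e

lemma IsIndependentSet.preimage_inl {T : Set (α ⊕ α × β)}
    (hT : IsIndependentSet (corona G H) T) : IsIndependentSet G (Sum.inl ⁻¹' T) :=
  fun _ hu _ hv => hT _ hu _ hv

lemma IsIndependentSet.corona_fiber {T : Set (α ⊕ α × β)}
    (hT : IsIndependentSet (corona G H) T) (v : α) :
    IsIndependentSet H {b | Sum.inr (v, b) ∈ T} :=
  fun _ hb _ hc hadj => hT _ hb _ hc ⟨rfl, hadj⟩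

lemma IsDominatingSet.corona_fiber {T : Set (α ⊕ α × β)}
    (hT : IsDominatingSet (corona G H) T) {v : α} (hv : Sum.inl v ∉ T) :
    IsDominatingSet H {b | Sum.inr (v, b) ∈ T} := by
  intro b hb
  obtain ⟨w | ⟨w, c⟩, hw, hadj⟩ := hT (Sum.inr (v, b)) hb
  · obtain rfl : v = w := hadj
    exact absurd hw hv
  · obtain ⟨rfl, hbc⟩ : v = w ∧ H.Adj b c := hadj
    exact ⟨c, hw, hbc⟩

lemma IsIndependentSet.add_mul_independentDominationNumber_le_ncard [Fintype α] [Finite β]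
    {T : Set (α ⊕ α × β)} (hind : IsIndependentSet (corona G H) T)
    (hdom : IsDominatingSet (corona G H) T) :
    (Sum.inl ⁻¹' T).ncard + (Fintype.card α - (Sum.inl ⁻¹' T).ncard) *
      independentDominationNumber H ≤ T.ncard := by
  classical
  set A := Sum.inl ⁻¹' T
  have hAc : Aᶜ.toFinset.card = Fintype.card α - A.ncard := by
    rw [← Set.ncard_eq_toFinset_card', Set.ncard_compl, Nat.card_eq_fintype_card]
  rw [ncard_eq_ncard_preimage_inl_add_sum T, ← hAc, ← smul_eq_mul, ← Finset.sum_const]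
  gcongr
  calc ∑ v ∈ Aᶜ.toFinset, independentDominationNumber H
      ≤ ∑ v ∈ Aᶜ.toFinset, {b | Sum.inr (v, b) ∈ T}.ncard :=
        Finset.sum_le_sum fun v hv => independentDominationNumber_le_ncard
          (hind.corona_fiber v) (hdom.corona_fiber (Set.mem_toFinset.mp hv))
    _ ≤ ∑ v, {b | Sum.inr (v, b) ∈ T}.ncard :=
        Finset.sum_le_sum_of_subset (Finset.subset_univ _)

lemma IsIndependentSet.corona_union {A : Set α} {D : Set β} (hA : IsIndependentSet G A)
    (hD : IsIndependentSet H D) :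
    IsIndependentSet (corona G H) (Sum.inl '' A ∪ Sum.inr '' (Aᶜ ×ˢ D)) := by
  rintro _ (⟨u, hu, rfl⟩ | ⟨⟨u, b⟩, ⟨hu, hb⟩, rfl⟩) _ (⟨v, hv, rfl⟩ | ⟨⟨v, c⟩, ⟨hv, hc⟩, rfl⟩)
    hadj
  · exact hA u hu v hv hadj
  · obtain rfl : u = v := hadj
    exact hv hu
  · obtain rfl : u = v := hadj
    exact hu hv
  · exact hD b hb c hc hadj.2

lemma IsDominatingSet.corona_union (A : Set α) {D : Set β} (hD : IsDominatingSet H D)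
    (hDne : D.Nonempty) :
    IsDominatingSet (corona G H) (Sum.inl '' A ∪ Sum.inr '' (Aᶜ ×ˢ D)) := by
  obtain ⟨d, hd⟩ := hDne
  rintro (v | ⟨v, b⟩) hx
  · have hv : v ∉ A := fun hv => hx (Or.inl ⟨v, hv, rfl⟩)
    exact ⟨Sum.inr (v, d), Or.inr ⟨(v, d), ⟨hv, hd⟩, rfl⟩, rfl⟩
  · by_cases hv : v ∈ A
    · exact ⟨Sum.inl v, Or.inl ⟨v, hv, rfl⟩, rfl⟩
    · obtain ⟨c, hc, hbc⟩ := hD b fun hb => hx (Or.inr ⟨(v, b), ⟨hv, hb⟩, rfl⟩)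
      exact ⟨Sum.inr (v, c), Or.inr ⟨(v, c), ⟨hv, hc⟩, rfl⟩, rfl, hbc⟩

lemma ncard_corona_union [Fintype α] [Finite β] (A : Set α) (D : Set β) :
    (Sum.inl '' A ∪ Sum.inr '' (Aᶜ ×ˢ D)).ncard
      = A.ncard + (Fintype.card α - A.ncard) * D.ncard := by
  rw [Set.ncard_union_eq Set.disjoint_image_inl_image_inr,
    Set.ncard_image_of_injective _ Sum.inl_injective,
    Set.ncard_image_of_injective _ Sum.inr_injective, Set.ncard_prod, Set.ncard_compl,
    Nat.card_eq_fintype_card]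

end Corona

theorem stmt_17_general {α β : Type*} [Fintype α] [Fintype β] [Nonempty β]
    (G : SimpleGraph α) (H : SimpleGraph β) :
    independentDominationNumber (corona G H)
      = Fintype.card α * independentDominationNumber H
        - independenceNumber G * (independentDominationNumber H - 1) := by
  set i := independentDominationNumber H
  have hcard (A : Set α) :
      A.ncard + (Fintype.card α - A.ncard) * i = Fintype.card α * i - A.ncard * (i - 1) :=
    add_sub_mul_eq_mul_sub_mul (Nat.card_eq_fintype_card (α := α) ▸ A.ncard_le_card)
      (one_le_independentDominationNumber H)
  apply le_antisymm
  · obtain ⟨A, hAind, hAcard⟩ := exists_isIndependentSet_ncard_eq_independenceNumber G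
    obtain ⟨D, hDind, hDdom, hDcard⟩ := exists_isIndependentSet_isDominatingSet_ncard_eq H
    calc independentDominationNumber (corona G H)
        ≤ (Sum.inl '' A ∪ Sum.inr '' (Aᶜ ×ˢ D)).ncard :=
          independentDominationNumber_le_ncard (hAind.corona_union hDind)
            (hDdom.corona_union A hDdom.nonempty)
      _ = _ := by rw [ncard_corona_union, hDcard, hcard, hAcard]
  · obtain ⟨T, hTind, hTdom, hTcard⟩ :=
      exists_isIndependentSet_isDominatingSet_ncard_eq (corona G H)
    calc Fintype.card α * i - independenceNumber G * (i - 1)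
        ≤ Fintype.card α * i - (Sum.inl ⁻¹' T).ncard * (i - 1) := by
          gcongr
          exact hTind.preimage_inl.ncard_le_independenceNumber
      _ = (Sum.inl ⁻¹' T).ncard + (Fintype.card α - (Sum.inl ⁻¹' T).ncard) * i :=
          (hcard _).symm
      _ ≤ T.ncard := hTind.add_mul_independentDominationNumber_le_ncard hTdom
      _ = independentDominationNumber (corona G H) := hTcard

/-- Let `G` be a connected graph of order `n` and `H` any graph with at least
one vertex. Then `i(G ⊙ H) = n·i(H) - β₀(G)·(i(H) - 1)`. -/
theorem stmt_17 {α β : Type*} [Fintype α] [Fintype β] [Nonempty β]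
    (G : SimpleGraph α) (H : SimpleGraph β) (hG : G.Connected) :
    independentDominationNumber (corona G H)
      = Fintype.card α * independentDominationNumber H
        - independenceNumber G * (independentDominationNumber H - 1) :=
  stmt_17_general G H
end
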